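/- arXiv:1911.11682 — 5 statements merged into one kernel-verified Lean document; each statement's English description precedes it below -/
import Mathlib

section
/- Every autoequivalence of the simplex category Δ is naturally isomorphic either to the identity functor or to the duality functor D, and these two are not naturally isomorphic to each other. Consequently the group of isomorphism classes of autoequivalences of Δ has exactly two elements. -/
open CategoryTheory

/-- The duality functor `D : Δ ⥤ Δ`, with `D [n] = [n]` and `D f (i) = m - f (n - i)`. -/
def SimplexDual : SimplexCategory ⥤ SimplexCategory where
  obj a := a
  map {a b} f := SimplexCategory.Hom.mk
    ⟨fun i => (f.toOrderHom i.rev).rev,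
      fun i j hij => Fin.rev_le_rev.2 (f.toOrderHom.monotone (Fin.rev_le_rev.2 hij))⟩
  map_id a := by
    apply SimplexCategory.Hom.ext
    ext i
    simp
  map_comp {a b c} f g := by
    apply SimplexCategory.Hom.ext
    ext i
    exact congrArg (fun x => (Fin.rev (g.toOrderHom x) : ℕ)) (Fin.rev_rev _).symm

/-!
An autoequivalence `E` of `Δ` preserves the terminal object `⦋0⦌`, hence the number `n + 1` of
points `⦋0⦌ ⟶ ⦋n⦌`; since `Δ` is skeletal, `E` fixes every object. Made the identity on objects,
`E` permutes the points of each `⦋n⦌` compatibly with all maps. On `⦋1⦌` the permutation is the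
identity or the reversal. In the first case, testing against the maps `⦋1⦌ ⟶ ⦋n⦌` shows that the
permutation of the points of `⦋n⦌` is monotone, hence the identity, so `E ≅ 𝟭`; in the second case
the same applies to `E ⋙ D`. Finally `𝟭 ≇ D`, because isomorphisms in `Δ` are identities while `D`
swaps the two points of `⦋1⦌`.
-/

open SimplexCategory Simplicial

theorem simplexDual_eq_rev : SimplexDual = SimplexCategory.rev := rfl

namespace SimplexCategory

lemma rev_map_const (x : SimplexCategory) (i : Fin (x.len + 1)) :
    rev.map (const ⦋0⦌ x i) = const ⦋0⦌ x i.rev :=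
  rfl

lemma isEmpty_id_iso_rev : IsEmpty (𝟭 SimplexCategory ≅ rev) := by
  refine ⟨fun α => ?_⟩
  have hα : ∀ x, α.hom.app x = 𝟙 x := fun x => eq_id_of_isIso _
  have h := α.hom.naturality (const ⦋0⦌ ⦋1⦌ 0)
  simp only [hα, Functor.id_map, rev_map_const] at h
  exact absurd (congrArg (fun f => f.toOrderHom 0) h) (by decide)

lemma natCard_hom_zero (y : SimplexCategory) : Nat.card (⦋0⦌ ⟶ y) = y.len + 1 := by
  rw [Nat.card_congr ⟨fun f => f.toOrderHom 0, const ⦋0⦌ y, fun f => (eq_const_of_zero f).symm,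
    fun _ => rfl⟩, Nat.card_eq_fintype_card, Fintype.card_fin]

lemma obj_eq_of_isEquivalence (E : SimplexCategory ⥤ SimplexCategory) [E.IsEquivalence]
    (x : SimplexCategory) : E.obj x = x := by
  have e₀ : E.obj ⦋0⦌ ≅ ⦋0⦌ := (isTerminalZero.isTerminalObj E).uniqueUpToIso isTerminalZero
  have hcard := Nat.card_congr
    (((Functor.FullyFaithful.ofFullyFaithful E).homEquiv (X := ⦋0⦌) (Y := x)).trans
      (e₀.homCongr (Iso.refl _)))
  ext
  simpa [natCard_hom_zero] using hcard.symm

section PointMap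

variable (G : SimplexCategory ⥤ SimplexCategory) (e : ∀ x, G.obj x ≅ x)

def pointMap (x : SimplexCategory) (i : Fin (x.len + 1)) : Fin (x.len + 1) :=
  ((G.copyObj id e).map (const ⦋0⦌ x i)).toOrderHom 0

lemma copyObj_map_const (x : SimplexCategory) (i : Fin (x.len + 1)) :
    (G.copyObj id e).map (const ⦋0⦌ x i) = const ⦋0⦌ x (pointMap G e x i) :=
  eq_const_of_zero _

lemma copyObj_map_apply_pointMap {x y : SimplexCategory} (f : x ⟶ y) (i : Fin (x.len + 1)) :
    ((G.copyObj id e).map f).toOrderHom (pointMap G e x i) = pointMap G e y (f.toOrderHom i) := by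
  have h := (G.copyObj id e).map_comp (const ⦋0⦌ x i) f
  rw [const_comp, copyObj_map_const, copyObj_map_const] at h
  exact congrArg (fun g => g.toOrderHom 0) h.symm

lemma pointMap_injective [G.Faithful] (x : SimplexCategory) :
    Function.Injective (pointMap G e x) := by
  intro i j hij
  have hmap : (G.copyObj id e).map (const ⦋0⦌ x i) = (G.copyObj id e).map (const ⦋0⦌ x j) := by
    rw [copyObj_map_const, copyObj_map_const, hij]
  have : (G.copyObj id e).Faithful := Functor.Faithful.of_iso (G.isoCopyObj id e)
  exact congrArg (fun g => g.toOrderHom 0) ((G.copyObj id e).map_injective hmap)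

lemma pointMap_comp_rev (x : SimplexCategory) (i : Fin (x.len + 1)) :
    pointMap (G ⋙ rev) (fun x => rev.mapIso (e x)) x i = (pointMap G e x i).rev := by
  have h : ((G ⋙ rev).copyObj id (fun x => rev.mapIso (e x))).map (const ⦋0⦌ x i) =
      rev.map ((G.copyObj id e).map (const ⦋0⦌ x i)) := by
    simp [Functor.copyObj]
  rw [pointMap, h, copyObj_map_const]
  rfl

variable {G e} [G.Faithful]

lemma pointMap_one_eq_id (h₀ : pointMap G e ⦋1⦌ 0 = 0) : pointMap G e ⦋1⦌ = id := by
  have h₁ : pointMap G e ⦋1⦌ 1 = 1 := by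
    have := (pointMap_injective G e ⦋1⦌).ne (show (1 : Fin 2) ≠ 0 by decide)
    exact Fin.eq_one_of_ne_zero _ (h₀ ▸ this)
  funext i
  fin_cases i
  exacts [h₀, h₁]

lemma pointMap_monotone (h₀ : pointMap G e ⦋1⦌ 0 = 0) (x : SimplexCategory) :
    Monotone (pointMap G e x) := by
  intro i j hij
  have hpt := pointMap_one_eq_id h₀
  have h0 := copyObj_map_apply_pointMap G e (mkOfLe (n := x.len) i j hij) 0
  have h1 := copyObj_map_apply_pointMap G e (mkOfLe (n := x.len) i j hij) 1
  rw [hpt] at h0 h1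
  exact h0.symm.trans_le
    ((((G.copyObj id e).map _).toOrderHom.monotone (Fin.zero_le _)).trans_eq h1)

lemma pointMap_eq_id (h₀ : pointMap G e ⦋1⦌ 0 = 0) (x : SimplexCategory) :
    pointMap G e x = id :=
  congrArg DFunLike.coe (OrderHom.eq_id_of_injective ⟨_, pointMap_monotone h₀ x⟩
    (pointMap_injective G e x))

lemma copyObj_map_eq (h₀ : pointMap G e ⦋1⦌ 0 = 0) {x y : SimplexCategory} (f : x ⟶ y) :
    (G.copyObj id e).map f = f := by
  ext i : 3
  have h := copyObj_map_apply_pointMap G e f i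
  rw [pointMap_eq_id h₀, pointMap_eq_id h₀] at h
  exact h

lemma nonempty_iso_id_of_pointMap (h₀ : pointMap G e ⦋1⦌ 0 = 0) : Nonempty (G ≅ 𝟭 _) :=
  ⟨G.isoCopyObj id e ≪≫ NatIso.ofComponents (fun x => Iso.refl x)
    (fun f => by rw [copyObj_map_eq h₀ f]; rfl)⟩

end PointMap

lemma nonempty_iso_id_or_rev (G : SimplexCategory ⥤ SimplexCategory) [G.Faithful]
    (e : ∀ x, G.obj x ≅ x) : Nonempty (G ≅ 𝟭 _) ∨ Nonempty (G ≅ rev) := by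
  rcases Fin.eq_zero_or_eq_succ (pointMap G e ⦋1⦌ 0) with h₀ | ⟨j, h₁⟩
  · exact .inl (nonempty_iso_id_of_pointMap h₀)
  · right
    have h₀ : pointMap (G ⋙ rev) (fun x => rev.mapIso (e x)) ⦋1⦌ 0 = 0 := by
      rw [pointMap_comp_rev, h₁, Fin.fin_one_eq_zero j]
      rfl
    obtain ⟨α⟩ := nonempty_iso_id_of_pointMap h₀
    exact ⟨Iso.isoCompInverse (H := revEquivalence) α ≪≫ rev.leftUnitor⟩

end SimplexCategory

/-- Every autoequivalence of the simplex category `Δ` is naturally isomorphic either to the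
identity functor or to the duality functor, these two are not naturally isomorphic to each
other, and the duality functor is itself an equivalence; hence the group of isomorphism
classes of autoequivalences of `Δ` has exactly two elements. -/
theorem stmt0 :
    (∀ E : SimplexCategory ⥤ SimplexCategory, E.IsEquivalence →
        (Nonempty (E ≅ 𝟭 SimplexCategory) ∨ Nonempty (E ≅ SimplexDual))) ∧
      SimplexDual.IsEquivalence ∧
      IsEmpty (𝟭 SimplexCategory ≅ SimplexDual) := by
  rw [simplexDual_eq_rev]
  exact ⟨fun E _ => nonempty_iso_id_or_rev E (fun x => eqToIso (obj_eq_of_isEquivalence E x)),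
    inferInstance, isEmpty_id_iso_rev⟩
end

section
/- Let C be a category with pullbacks and let p: X → Y be a right fibration of simplicial objects in C. If Y satisfies the Segal condition, then X satisfies the Segal condition. -/
/-!
The square comparing `p` along the last edge `{n-1 < n} ⊆ [n]` is a pullback: the edge keeps
the last vertex, so pasting it with the right-fibration square of `[1]` gives the
right-fibration square of `[n]`. Pasting it on top of the Segal square of `Y` gives a pullback
whose lower half is the right-fibration square of `[n-1]`; cancelling that leaves the Segal
square of `X`.
-/

open CategoryTheory CategoryTheory.Limits Opposite

/-- The morphism `[0] ⟶ [m]` in `Δ` picking out the vertex `i`. -/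
def pt (m : ℕ) (i : Fin (m + 1)) : SimplexCategory.mk 0 ⟶ SimplexCategory.mk m :=
  SimplexCategory.Hom.mk ⟨fun _ => i, fun _ _ _ => le_refl _⟩

/-- The morphism `[1] ⟶ [m]` in `Δ` picking out the edge from `a` to `b` (for `a ≤ b`). -/
def edge (m : ℕ) (a b : Fin (m + 1)) (hab : a ≤ b) :
    SimplexCategory.mk 1 ⟶ SimplexCategory.mk m :=
  SimplexCategory.Hom.mk
    ⟨fun t => if (t : ℕ) = 0 then a else b, by
      intro s t hst
      have hst' : (s : ℕ) ≤ (t : ℕ) := hst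
      dsimp only
      by_cases hs : (s : ℕ) = 0
      · by_cases ht : (t : ℕ) = 0
        · simp [hs, ht]
        · simp [hs, ht, hab]
      · have ht : ¬(t : ℕ) = 0 := by omega
        simp [hs, ht]⟩

/-- A map `p : X ⟶ Y` of simplicial objects is a right fibration if for every `n ≥ 1` the
square with corners `Xₙ, X₀, Yₙ, Y₀` induced by the inclusion `{n} ⊆ [n]` is a pullback. -/
def IsRightFibration {C : Type*} [Category C] {X Y : SimplexCategoryᵒᵖ ⥤ C} (p : X ⟶ Y) :
    Prop :=
  ∀ m : ℕ,
    IsPullback (X.map (pt (m + 1) (Fin.last (m + 1))).op)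
      (p.app (op (SimplexCategory.mk (m + 1)))) (p.app (op (SimplexCategory.mk 0)))
      (Y.map (pt (m + 1) (Fin.last (m + 1))).op)

/-- A simplicial object `Z` satisfies the Segal condition if for every `n ≥ 2` the square
with corners `Zₙ, Z₁, Z_{n-1}, Z₀` induced by the inclusions `{n-1 < n} ⊆ [n]`,
`{0 < ⋯ < n-1} ⊆ [n]` and `{n-1}` into both, is a pullback square. -/
def SatisfiesSegal {C : Type*} [Category C] (Z : SimplexCategoryᵒᵖ ⥤ C) : Prop :=
  ∀ m : ℕ,
    IsPullback
      (Z.map (edge (m + 2) ⟨m + 1, by omega⟩ ⟨m + 2, by omega⟩ (by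
        exact Fin.mk_le_mk.mpr (by omega))).op)
      (Z.map (SimplexCategory.δ (Fin.last (m + 2))).op)
      (Z.map (pt 1 0).op)
      (Z.map (pt (m + 1) (Fin.last (m + 1))).op)

lemma pt_comp {n m : ℕ} (i : Fin (n + 1))
    (f : SimplexCategory.mk n ⟶ SimplexCategory.mk m) :
    pt n i ≫ f = pt m (f.toOrderHom i) :=
  rfl

lemma pt_zero_comp_edge_last (m : ℕ) :
    pt 1 0 ≫ edge (m + 2) ⟨m + 1, by omega⟩ ⟨m + 2, by omega⟩ (Fin.mk_le_mk.mpr (by omega)) =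
      pt (m + 1) (Fin.last (m + 1)) ≫ SimplexCategory.δ (Fin.last (m + 2)) := by
  simp only [pt_comp]
  congr 1
  ext
  simp [edge, SimplexCategory.δ]

lemma IsRightFibration.isPullback_map {C : Type*} [Category C] {X Y : SimplexCategoryᵒᵖ ⥤ C}
    {p : X ⟶ Y} (hp : IsRightFibration p) {k n : ℕ}
    (f : SimplexCategory.mk (k + 1) ⟶ SimplexCategory.mk (n + 1))
    (hf : f.toOrderHom (Fin.last (k + 1)) = Fin.last (n + 1)) :
    IsPullback (X.map f.op) (p.app (op (SimplexCategory.mk (n + 1))))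
      (p.app (op (SimplexCategory.mk (k + 1)))) (Y.map f.op) := by
  have hlast : pt (k + 1) (Fin.last (k + 1)) ≫ f = pt (n + 1) (Fin.last (n + 1)) := by
    rw [pt_comp, hf]
  refine IsPullback.of_right ?_ (p.naturality f.op) (hp k)
  simp only [← Functor.map_comp, ← op_comp, hlast]
  exact hp n

theorem stmt2_general {C : Type*} [Category C]
    {X Y : SimplexCategoryᵒᵖ ⥤ C} (p : X ⟶ Y)
    (hp : IsRightFibration p) (hY : SatisfiesSegal Y) : SatisfiesSegal X := by
  intro m
  have hEdge := hp.isPullback_map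
    (edge (m + 2) ⟨m + 1, by omega⟩ ⟨m + 2, by omega⟩ (Fin.mk_le_mk.mpr (by omega))) rfl
  have hPasted := hEdge.paste_vert (hY m)
  rw [← p.naturality, ← p.naturality] at hPasted
  refine hPasted.of_bot ?_ (hp m)
  simp only [← Functor.map_comp, ← op_comp, pt_zero_comp_edge_last]

/-- If `p : X ⟶ Y` is a right fibration of simplicial objects in a category with pullbacks
and `Y` satisfies the Segal condition, then `X` satisfies the Segal condition. -/
theorem stmt2 {C : Type*} [Category C] [HasPullbacks C]
    {X Y : SimplexCategoryᵒᵖ ⥤ C} (p : X ⟶ Y)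
    (hp : IsRightFibration p) (hY : SatisfiesSegal Y) : SatisfiesSegal X :=
  stmt2_general p hp hY
end

section
/- Let C be a simplicial object in a category with pullbacks satisfying the strong Segal condition. Then the twisted arrow simplicial object Tw(C) := C ∘ e^op is a right fibration over C × C^op; concretely, for every n ≥ 1 the canonical map C_{2n+1} → C_1 ×_{C_0 × C_0} (C_n × C_n) is an isomorphism. -/
open CategoryTheory CategoryTheory.Limits Opposite

/-- The inclusion `[m] ⟶ [m+l]` of `{0,…,m}`. -/
def inclFirst (m l : ℕ) : SimplexCategory.mk m ⟶ SimplexCategory.mk (m + l) :=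
  SimplexCategory.Hom.mk ⟨Fin.castLE (show m + 1 ≤ m + l + 1 by omega), fun _ _ hab => hab⟩

/-- The inclusion `[l] ⟶ [m+l]` of `{m,…,m+l}`. -/
def inclLast (m l : ℕ) : SimplexCategory.mk l ⟶ SimplexCategory.mk (m + l) :=
  SimplexCategory.Hom.mk
    ⟨fun i => ⟨m + (i : ℕ), by
      show m + (i : ℕ) < m + l + 1
      have hi : (i : ℕ) < l + 1 := i.isLt
      omega⟩, fun a b h => by
      have h' : (a : ℕ) ≤ (b : ℕ) := h
      simp only [Fin.mk_le_mk]
      omega⟩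

/-- A simplicial object `C` satisfies the strong Segal condition if for all `m, l ≥ 0` the
square with corners `C_{m+l}, C_m, C_l, C_0` induced by the inclusions `{0,…,m} ⊆ [m+l]`,
`{m,…,m+l} ⊆ [m+l]` and `{m}` is a pullback square. -/
def StrongSegal {C : Type*} [Category C] (Z : SimplexCategoryᵒᵖ ⥤ C) : Prop :=
  ∀ m l : ℕ,
    IsPullback (Z.map (inclFirst m l).op) (Z.map (inclLast m l).op)
      (Z.map (pt m (Fin.last m)).op) (Z.map (pt l 0).op)

/-- The first join inclusion `[n] ⟶ [n] ⋆ [n]ᵒᵖ ≅ [2n+1]`, `i ↦ i`. -/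
def jFirst (n : ℕ) : SimplexCategory.mk n ⟶ SimplexCategory.mk (n + (n + 1)) :=
  SimplexCategory.Hom.mk ⟨Fin.castLE (show n + 1 ≤ n + (n + 1) + 1 by omega), fun _ _ hab => hab⟩

/-- The second join inclusion `[n]ᵒᵖ ⟶ [n] ⋆ [n]ᵒᵖ ≅ [2n+1]`, read as the order-preserving
map `[n] ⟶ [2n+1]`, `j ↦ n + 1 + j`. -/
def jSecond (n : ℕ) : SimplexCategory.mk n ⟶ SimplexCategory.mk (n + (n + 1)) :=
  SimplexCategory.Hom.mk
    ⟨fun i => ⟨n + 1 + (i : ℕ), by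
      show n + 1 + (i : ℕ) < n + (n + 1) + 1
      have hi : (i : ℕ) < n + 1 := i.isLt
      omega⟩, fun a b h => by
      have h' : (a : ℕ) ≤ (b : ℕ) := h
      simp only [Fin.mk_le_mk]
      omega⟩

/-- The middle edge `[1] ⟶ [2n+1]`, `0 ↦ n`, `1 ↦ n+1`; it is `e` applied to `{n} ⊆ [n]`. -/
def gMid (n : ℕ) : SimplexCategory.mk 1 ⟶ SimplexCategory.mk (n + (n + 1)) :=
  edge (n + (n + 1)) ⟨n, by omega⟩ ⟨n + 1, by omega⟩ (Fin.mk_le_mk.mpr (by omega))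

/-!
Cutting `[2n+1]` at `n` and then `[n+1]` at `1`, the strong Segal condition exhibits
`X_{2n+1}` as the iterated pullback `Xₙ ×_{X₀} (X₁ ×_{X₀} Xₙ)`, in which the `X₁` factor is the
middle edge `gMid n` and the two `Xₙ` factors are the join inclusions. An iterated pullback of
this shape is the same as the pullback `X₁ ×_{X₀ × X₀} (Xₙ × Xₙ)`.
-/

/-- An iterated pullback `Y₁ ×_{Z₁} (X ×_{Z₂} Y₂)` is the pullback of `X ⟶ Z₁ ⨯ Z₂` along
`Y₁ ⨯ Y₂ ⟶ Z₁ ⨯ Z₂`. -/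
theorem CategoryTheory.IsPullback.prod_lift_prod_map {C : Type*} [Category C]
    {P Q X Y₁ Y₂ Z₁ Z₂ : C} [HasBinaryProduct Y₁ Y₂] [HasBinaryProduct Z₁ Z₂]
    {u : X ⟶ Z₁} {v : X ⟶ Z₂} {s : Y₁ ⟶ Z₁} {t : Y₂ ⟶ Z₂}
    {q₁ : Q ⟶ X} {q₂ : Q ⟶ Y₂} {p₁ : P ⟶ Y₁} {p₂ : P ⟶ Q}
    (hQ : IsPullback q₁ q₂ v t) (hP : IsPullback p₁ p₂ s (q₁ ≫ u)) :
    IsPullback (p₂ ≫ q₁) (prod.lift p₁ (p₂ ≫ q₂)) (prod.lift u v) (prod.map s t) := by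
  refine IsPullback.mk' ?_ (fun T φ φ' h₁ h₂ => ?_) (fun T a b hab => ?_)
  · ext
    · simp [prod.lift_fst, hP.w]
    · simp [prod.lift_snd, hQ.w]
  · have hp₁ : φ ≫ p₁ = φ' ≫ p₁ := by simpa [prod.lift_fst] using h₂ =≫ prod.fst
    have hq₂ : φ ≫ p₂ ≫ q₂ = φ' ≫ p₂ ≫ q₂ := by simpa [prod.lift_snd] using h₂ =≫ prod.snd
    exact hP.hom_ext hp₁ (hQ.hom_ext (by simpa using h₁) (by simpa using hq₂))
  · have hu : a ≫ u = b ≫ prod.fst ≫ s := by simpa [prod.lift_fst] using hab =≫ prod.fst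
    have hv : a ≫ v = b ≫ prod.snd ≫ t := by simpa [prod.lift_snd] using hab =≫ prod.snd
    obtain ⟨l, hl₁, hl₂⟩ := hQ.exists_lift a (b ≫ prod.snd) (by simpa using hv)
    obtain ⟨k, hk₁, hk₂⟩ := hP.exists_lift (b ≫ prod.fst) l (by simp [← hu, ← hl₁])
    refine ⟨k, by simp [reassoc_of% hk₂, hl₁], ?_⟩
    ext <;> simp [prod.lift_fst, prod.lift_snd, hk₁, reassoc_of% hk₂, hl₂]

/-- `inclFirst m l` with codomain `[k]` for `k = m + l`; needed because `1 + n` and `n + 1` are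
not definitionally equal. -/
def inclFirstOfEq (m l k : ℕ) (h : m + l = k) : SimplexCategory.mk m ⟶ SimplexCategory.mk k :=
  SimplexCategory.Hom.mk ⟨Fin.castLE (show m + 1 ≤ k + 1 by omega), fun _ _ hab => hab⟩

def inclLastOfEq (m l k : ℕ) (h : m + l = k) : SimplexCategory.mk l ⟶ SimplexCategory.mk k :=
  SimplexCategory.Hom.mk
    ⟨fun i : Fin (l + 1) => (⟨m + i, by omega⟩ : Fin (k + 1)),
      fun _ _ hab => Nat.add_le_add_left hab m⟩

theorem StrongSegal.isPullback_of_add_eq {C : Type*} [Category C] {X : SimplexCategoryᵒᵖ ⥤ C}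
    (hX : StrongSegal X) (m l k : ℕ) (h : m + l = k) :
    IsPullback (X.map (inclFirstOfEq m l k h).op) (X.map (inclLastOfEq m l k h).op)
      (X.map (pt m (Fin.last m)).op) (X.map (pt l 0).op) := by
  subst h
  exact hX m l

theorem pt_zero_comp_inclFirstOfEq (m l k : ℕ) (h : m + l = k) :
    pt m 0 ≫ inclFirstOfEq m l k h = pt k 0 :=
  rfl

theorem gMid_eq_comp (n : ℕ) (h : 1 + n = n + 1) :
    gMid n = inclFirstOfEq 1 n (n + 1) h ≫ inclLast n (n + 1) := by
  ext i
  fin_cases i <;> rfl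

theorem jSecond_eq_comp (n : ℕ) (h : 1 + n = n + 1) :
    jSecond n = inclLastOfEq 1 n (n + 1) h ≫ inclLast n (n + 1) := by
  ext i
  show n + 1 + (i : ℕ) = n + (1 + (i : ℕ))
  omega

theorem stmt4_general {C : Type*} [Category C] [HasBinaryProducts C]
    (X : SimplexCategoryᵒᵖ ⥤ C) (hX : StrongSegal X) (n : ℕ) :
    IsPullback
      (X.map (gMid n).op)
      (prod.lift (X.map (jFirst n).op) (X.map (jSecond n).op))
      (prod.lift (X.map (pt 1 0).op) (X.map (pt 1 1).op))
      (prod.map (X.map (pt n (Fin.last n)).op) (X.map (pt n 0).op)) := by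
  have h : 1 + n = n + 1 := Nat.add_comm 1 n
  have hsplit := hX n (n + 1)
  rw [← pt_zero_comp_inclFirstOfEq 1 n (n + 1) h, op_comp, X.map_comp] at hsplit
  rw [gMid_eq_comp n h, jSecond_eq_comp n h, op_comp, op_comp, X.map_comp, X.map_comp]
  exact (hX.isPullback_of_add_eq 1 n (n + 1) h).prod_lift_prod_map hsplit

/-- Let `X` be a simplicial object satisfying the strong Segal condition in a category with
pullbacks (and binary products).  Then the twisted arrow simplicial object
`Tw(X) = X ∘ eᵒᵖ` is a right fibration over `X × Xᵒᵖ`: concretely, for every `n ≥ 1` the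
canonical map `X_{2n+1} ⟶ X₁ ×_{X₀ × X₀} (Xₙ × Xₙ)` is an isomorphism, i.e. the displayed
square is a pullback square. -/
theorem stmt4 {C : Type*} [Category C] [HasPullbacks C] [HasBinaryProducts C]
    (X : SimplexCategoryᵒᵖ ⥤ C) (hX : StrongSegal X) (n : ℕ) (hn : 1 ≤ n) :
    IsPullback
      (X.map (gMid n).op)
      (prod.lift (X.map (jFirst n).op) (X.map (jSecond n).op))
      (prod.lift (X.map (pt 1 0).op) (X.map (pt 1 1).op))
      (prod.map (X.map (pt n (Fin.last n)).op) (X.map (pt n 0).op)) :=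
  stmt4_general X hX n
end

section
/- Let B be a category with pushouts and K a category with an initial object ⊥. Then the evaluation functor ev_⊥: Fun(K, B) → B at the initial object is a Grothendieck opfibration, and a morphism φ: F → G in Fun(K, B) is opcartesian with respect to ev_⊥ if and only if φ is a cocartesian natural transformation, i.e. for every morphism u: x → y in K the naturality square with corners F(x), F(y), G(x), G(y) is a pushout square. -/
/-!
A morphism `f : F ⊥ ⟶ A` lifts to `φ : F ⟶ G` with `G x = A ⊔_{F ⊥} F x`; since every object
receives a unique map from `⊥`, pasting these pointwise pushouts shows that every naturality
square of `φ` is a pushout. Conversely, a transformation whose squares `F ⊥ → F x` are pushouts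
is opcartesian, the lift being assembled pointwise from the universal property of those squares.
Finally, an opcartesian `φ` is isomorphic under `F` to the canonical lift of `φ_⊥`, and pushout
squares are stable under such an isomorphism.
-/

open CategoryTheory CategoryTheory.Limits

/-- A morphism `φ : F ⟶ G` is opcartesian with respect to `p : E ⥤ B` if for every `H`
and every `ψ : F ⟶ H` with a factorization `p ψ = p φ ≫ χ` in `B`, there is a unique lift
`χ' : G ⟶ H` with `φ ≫ χ' = ψ` and `p χ' = χ`. -/
def IsOpcartesian {E B : Type*} [Category E] [Category B] (p : E ⥤ B)
    {F G : E} (φ : F ⟶ G) : Prop :=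
  ∀ (H : E) (ψ : F ⟶ H) (χ : p.obj G ⟶ p.obj H),
    p.map ψ = p.map φ ≫ χ → ∃! χ' : G ⟶ H, φ ≫ χ' = ψ ∧ p.map χ' = χ

/-- `p : E ⥤ B` is a Grothendieck opfibration if every morphism `f : p F ⟶ A` of `B` admits
an opcartesian lift with source `F`. -/
def IsOpfibration {E B : Type*} [Category E] [Category B] (p : E ⥤ B) : Prop :=
  ∀ (F : E) (A : B) (f : p.obj F ⟶ A),
    ∃ (G : E) (φ : F ⟶ G) (e : p.obj G = A),
      IsOpcartesian p φ ∧ p.map φ ≫ eqToHom e = f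

section Opcartesian

variable {E B : Type*} [Category E] [Category B] {p : E ⥤ B}

lemma IsOpcartesian.hom_ext {F G H : E} {φ : F ⟶ G} (hφ : IsOpcartesian p φ) {a b : G ⟶ H}
    (h : φ ≫ a = φ ≫ b) (hp : p.map a = p.map b) : a = b := by
  obtain ⟨_, _, uniq⟩ := hφ H (φ ≫ a) (p.map a) (p.map_comp _ _)
  exact (uniq a ⟨rfl, rfl⟩).trans (uniq b ⟨h.symm, hp.symm⟩).symm

/-- Opcartesian lifts are unique up to isomorphism. -/
lemma IsOpcartesian.isIso_of_comp_eq {F G G' : E} {φ : F ⟶ G} {φ' : F ⟶ G'}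
    (hφ : IsOpcartesian p φ) (hφ' : IsOpcartesian p φ') (θ : G ⟶ G') (hθ : φ ≫ θ = φ')
    [IsIso (p.map θ)] : IsIso θ := by
  obtain ⟨θ', ⟨hθ', hpθ'⟩, -⟩ := hφ' G φ (inv (p.map θ)) (by simp [← hθ])
  refine ⟨θ', hφ.hom_ext ?_ ?_, hφ'.hom_ext ?_ ?_⟩
  · rw [reassoc_of% hθ, hθ', Category.comp_id]
  · simp [hpθ']
  · rw [reassoc_of% hθ', hθ, Category.comp_id]
  · simp [hpθ']

end Opcartesian

namespace CategoryTheory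

variable {B K : Type*} [Category B] [Category K]

lemma Functor.exists_iso_obj_eq (G : K ⥤ B) (k : K) {A : B} (i : G.obj k ≅ A) :
    ∃ (G' : K ⥤ B) (η : G ≅ G') (e : G'.obj k = A), η.hom.app k = i.hom ≫ eqToHom e.symm := by
  classical
  let obj : K → B := fun x => if x = k then A else G.obj x
  have hk : obj k = A := if_pos rfl
  let e : ∀ x, G.obj x ≅ obj x := fun x =>
    if h : x = k then eqToIso (congrArg G.obj h) ≪≫ i ≪≫ eqToIso ((if_pos h).symm)
    else eqToIso (if_neg h).symm
  refine ⟨G.copyObj obj e, G.isoCopyObj obj e, hk, ?_⟩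
  simp [e]
  rfl

lemma NatTrans.isPushout_naturality_comp {F G G' : K ⥤ B} {φ : F ⟶ G}
    (h : ∀ ⦃x y : K⦄ (u : x ⟶ y), IsPushout (F.map u) (φ.app x) (φ.app y) (G.map u))
    (η : G ⟶ G') [IsIso η] ⦃x y : K⦄ (u : x ⟶ y) :
    IsPushout (F.map u) ((φ ≫ η).app x) ((φ ≫ η).app y) (G'.map u) :=
  (h u).paste_vert (IsPushout.of_vert_isIso ⟨η.naturality u⟩)

variable {bot : K} (hbot : IsInitial bot)
include hbot

lemma isOpcartesian_evaluation_of_isPushout {F G : K ⥤ B} (φ : F ⟶ G)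
    (h : ∀ ⦃x y : K⦄ (u : x ⟶ y), IsPushout (F.map u) (φ.app x) (φ.app y) (G.map u)) :
    IsOpcartesian ((evaluation K B).obj bot) φ := by
  intro H ψ χ hχ
  simp only [evaluation_obj_map] at hχ
  have sq : ∀ x, IsPushout (F.map (hbot.to x)) (φ.app bot) (φ.app x) (G.map (hbot.to x)) :=
    fun x => h (hbot.to x)
  have w : ∀ x, F.map (hbot.to x) ≫ ψ.app x = φ.app bot ≫ χ ≫ H.map (hbot.to x) := by
    intro x
    rw [ψ.naturality, hχ, Category.assoc]
  have map_to_comp : ∀ (P : K ⥤ B) {x y : K} (v : x ⟶ y),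
      P.map (hbot.to x) ≫ P.map v = P.map (hbot.to y) := by
    intro P x y v
    rw [← P.map_comp, hbot.to_comp]
  let θ : G ⟶ H :=
    { app := fun x => (sq x).desc (ψ.app x) (χ ≫ H.map (hbot.to x)) (w x)
      naturality := fun x y v => by
        apply (sq x).hom_ext
        · rw [reassoc_of% (sq x).inl_desc, ← φ.naturality_assoc, (sq y).inl_desc,
            ψ.naturality]
        · rw [reassoc_of% (sq x).inr_desc, reassoc_of% map_to_comp, (sq y).inr_desc,
            Category.assoc, map_to_comp] }
  refine ⟨θ, ⟨NatTrans.ext (funext fun x => (sq x).inl_desc _ _ _), ?_⟩, ?_⟩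
  · change θ.app bot = χ
    apply (sq bot).hom_ext
    · exact ((sq bot).inl_desc _ _ _).trans hχ
    · rw [(sq bot).inr_desc, hbot.to_self, G.map_id, H.map_id]
      simp
  · rintro θ' ⟨hθ', hθ'bot⟩
    simp only [evaluation_obj_map] at hθ'bot
    ext x
    apply (sq x).hom_ext
    · rw [(sq x).inl_desc, ← hθ', NatTrans.comp_app]
    · rw [(sq x).inr_desc, θ'.naturality, hθ'bot]

/-- The lift is the pointwise pushout `G x = A ⊔_{F ⊥} F x`. -/
lemma exists_isPushout_naturality_lift [HasPushouts B] (F : K ⥤ B) {A : B}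
    (f : F.obj bot ⟶ A) :
    ∃ (G : K ⥤ B) (φ : F ⟶ G) (i : G.obj bot ≅ A), φ.app bot ≫ i.hom = f ∧
      ∀ ⦃x y : K⦄ (u : x ⟶ y), IsPushout (F.map u) (φ.app x) (φ.app y) (G.map u) := by
  let d : (Functor.const K).obj (F.obj bot) ⟶ F :=
    { app := fun x => F.map (hbot.to x)
      naturality := fun x y u => by simp [← F.map_comp, hbot.to_comp] }
  let φ : F ⟶ pushout d ((Functor.const K).map f) := pushout.inl _ _
  let ρ : (Functor.const K).obj A ⟶ pushout d ((Functor.const K).map f) := pushout.inr _ _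
  have pointwise : ∀ x, IsPushout (F.map (hbot.to x)) f (φ.app x) (ρ.app x) := fun x => by
    simpa [d, φ, ρ] using
      (IsPushout.of_hasPushout d ((Functor.const K).map f)).map ((evaluation K B).obj x)
  have hbot_sq : IsPushout (𝟙 _) f (φ.app bot) (ρ.app bot) := by
    simpa [hbot.to_self] using pointwise bot
  have : IsIso (ρ.app bot) := hbot_sq.isIso_inr_of_isIso
  refine ⟨_, φ, (asIso (ρ.app bot)).symm, by simpa using hbot_sq.w, fun x y u => ?_⟩
  refine IsPushout.of_left ?_ (φ.naturality u) (pointwise x)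
  rw [← F.map_comp, hbot.to_comp, ← ρ.naturality u]
  simpa using pointwise y

lemma isOpcartesian_evaluation_iff [HasPushouts B] {F G : K ⥤ B} (φ : F ⟶ G) :
    IsOpcartesian ((evaluation K B).obj bot) φ ↔
      ∀ ⦃x y : K⦄ (u : x ⟶ y), IsPushout (F.map u) (φ.app x) (φ.app y) (G.map u) := by
  refine ⟨fun hφ => ?_, isOpcartesian_evaluation_of_isPushout hbot φ⟩
  obtain ⟨G₀, φ₀, i, hi, h₀⟩ := exists_isPushout_naturality_lift hbot F (φ.app bot)
  have hφ₀ := isOpcartesian_evaluation_of_isPushout hbot φ₀ h₀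
  obtain ⟨θ, ⟨hθ, hθbot⟩, -⟩ := hφ₀ G φ i.hom (by simpa using hi.symm)
  have : IsIso (((evaluation K B).obj bot).map θ) := by
    rw [hθbot]; infer_instance
  have : IsIso θ := hφ₀.isIso_of_comp_eq hφ θ hθ
  exact hθ ▸ NatTrans.isPushout_naturality_comp h₀ θ

lemma isOpfibration_evaluation [HasPushouts B] : IsOpfibration ((evaluation K B).obj bot) := by
  intro F A f
  obtain ⟨G₀, φ₀, i, hi, h₀⟩ := exists_isPushout_naturality_lift hbot F f
  obtain ⟨G, η, e, he⟩ := G₀.exists_iso_obj_eq bot i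
  refine ⟨G, φ₀ ≫ η.hom, e, (isOpcartesian_evaluation_iff hbot _).2
    (NatTrans.isPushout_naturality_comp h₀ η.hom), ?_⟩
  simp [he, hi]

end CategoryTheory

open CategoryTheory in
/-- If `B` has pushouts and `K` has an initial object `⊥`, then evaluation at `⊥` is a
Grothendieck opfibration `Fun(K,B) → B`, and a morphism `φ : F ⟶ G` is opcartesian if and
only if every naturality square of `φ` is a pushout square (i.e. `φ` is a cocartesian
natural transformation). -/
theorem stmt9 {B K : Type*} [Category B] [Category K] [HasPushouts B]
    (bot : K) (hbot : IsInitial bot) :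
    IsOpfibration ((evaluation K B).obj bot) ∧
      ∀ (F G : K ⥤ B) (φ : F ⟶ G),
        IsOpcartesian ((evaluation K B).obj bot) φ ↔
          ∀ ⦃x y : K⦄ (u : x ⟶ y), IsPushout (F.map u) (φ.app x) (φ.app y) (G.map u) :=
  ⟨isOpfibration_evaluation hbot, fun _ _ => isOpcartesian_evaluation_iff hbot⟩
end

section
/- Let A be an abelian category and K a category with initial object ⊥. Let Fun^mono(K, A) ⊆ Fun(K, A) denote the full subcategory of functors sending every morphism of K to a monomorphism. Then the evaluation functor Fun^mono(K, A) → A at ⊥ is a Grothendieck opfibration, and a morphism φ: F → G in Fun^mono(K, A) is opcartesian if and only if every naturality square of φ is a pushout square in A. -/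
open CategoryTheory CategoryTheory.Limits

/-- The property of a functor `K ⥤ A` of sending every morphism to a monomorphism. -/
def MonoValued {A K : Type*} [Category A] [Category K] (F : K ⥤ A) : Prop :=
  ∀ ⦃x y : K⦄ (u : x ⟶ y), Mono (F.map u)

/-!
The maps `F.map (hbot.to x)` assemble into a natural transformation from the constant functor
at `F.obj bot` to `F`. For `φ : F ⟶ G`, the square formed by these transformations for `F` and
`G`, by `φ` and by the constant `φ.app bot` is a pushout in `K ⥤ A` exactly when the naturality
squares of `φ` at the maps out of `bot` are, and then, by pasting, all naturality squares are.
Such a square makes `φ` opcartesian: a lift is the map out of the pushout in `K ⥤ A`.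
Conversely, the pointwise pushout of `F` along `f : F.obj bot ⟶ A₀` is an opcartesian lift of `f`,
mono-valued because pushouts of monomorphisms in an abelian category are monomorphisms; any
opcartesian lift of `φ.app bot` is isomorphic to it under `F`, hence has pushout squares too.
-/

section Opcartesian

variable {E B : Type*} [Category E] [Category B] {p : E ⥤ B}

theorem IsOpcartesian.exists_iso {F G G' : E} {φ : F ⟶ G} {φ' : F ⟶ G'}
    (hφ : IsOpcartesian p φ) (hφ' : IsOpcartesian p φ') (e : p.obj G ≅ p.obj G')
    (he : p.map φ ≫ e.hom = p.map φ') : ∃ i : G ≅ G', φ ≫ i.hom = φ' := by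
  obtain ⟨α, ⟨hα, hpα⟩, -⟩ := hφ G' φ' e.hom he.symm
  obtain ⟨β, ⟨hβ, hpβ⟩, -⟩ :=
    hφ' G φ e.inv (by rw [← he, Category.assoc, e.hom_inv_id, Category.comp_id])
  have hαβ : α ≫ β = 𝟙 G := (hφ G φ (𝟙 _) (Category.comp_id _).symm).unique
    ⟨by rw [reassoc_of% hα, hβ], by rw [p.map_comp, hpα, hpβ, e.hom_inv_id]⟩
    ⟨Category.comp_id φ, p.map_id G⟩
  have hβα : β ≫ α = 𝟙 G' := (hφ' G' φ' (𝟙 _) (Category.comp_id _).symm).unique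
    ⟨by rw [reassoc_of% hβ, hα], by rw [p.map_comp, hpα, hpβ, e.inv_hom_id]⟩
    ⟨Category.comp_id φ', p.map_id G'⟩
  exact ⟨⟨α, β, hαβ, hβα⟩, hα⟩

end Opcartesian

theorem CategoryTheory.Functor.exists_iso_obj_eq_s17 {K A : Type*} [Category K] [Category A]
    (G : K ⥤ A) {x₀ : K} {A₀ : A} (e : G.obj x₀ ≅ A₀) :
    ∃ (G' : K ⥤ A) (i : G ≅ G') (h : G'.obj x₀ = A₀), i.hom.app x₀ = e.hom ≫ eqToHom h.symm := by
  classical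
  let i : ∀ x, G.obj x ≅ Function.update G.obj x₀ A₀ x := fun x =>
    if h : x = x₀ then
      eqToIso (congrArg G.obj h) ≪≫ e ≪≫ eqToIso (by rw [h, Function.update_self])
    else eqToIso (Function.update_of_ne h A₀ G.obj).symm
  refine ⟨G.copyObj _ i, G.isoCopyObj _ i, by simp, ?_⟩
  simp only [Functor.isoCopyObj_hom_app, i, dif_pos, eqToIso_refl, Iso.refl_trans, Iso.trans_hom,
    eqToIso.hom]
  rfl

section InitialObject

variable {K A : Type*} [Category K] [Category A] {bot : K} (hbot : IsInitial bot)

@[simps]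
def CategoryTheory.Limits.IsInitial.fromConst (F : K ⥤ A) :
    (Functor.const K).obj (F.obj bot) ⟶ F where
  app x := F.map (hbot.to x)
  naturality x y u := by simp [← F.map_comp]

theorem isPushout_naturality_of_isInitial {F G : K ⥤ A} (φ : F ⟶ G)
    (h : ∀ x, IsPushout (F.map (hbot.to x)) (φ.app bot) (φ.app x) (G.map (hbot.to x)))
    ⦃x y : K⦄ (u : x ⟶ y) : IsPushout (F.map u) (φ.app x) (φ.app y) (G.map u) := by
  have hy := h y
  rw [← hbot.to_comp u, F.map_comp, G.map_comp] at hy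
  exact hy.of_left (φ.naturality u) (h x)

theorem isPushout_fromConst_iff [HasPushouts A] {F G : K ⥤ A} (φ : F ⟶ G) :
    IsPushout (hbot.fromConst F) ((Functor.const K).map (φ.app bot)) φ (hbot.fromConst G) ↔
      ∀ ⦃x y : K⦄ (u : x ⟶ y), IsPushout (F.map u) (φ.app x) (φ.app y) (G.map u) := by
  rw [IsPushout.iff_app]
  exact ⟨fun h => isPushout_naturality_of_isInitial hbot φ h, fun h x => h (hbot.to x)⟩

theorem CategoryTheory.IsPushout.fromConst_comp_iso {F G G' : K ⥤ A} {φ : F ⟶ G}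
    (h : IsPushout (hbot.fromConst F) ((Functor.const K).map (φ.app bot)) φ (hbot.fromConst G))
    (i : G ≅ G') :
    IsPushout (hbot.fromConst F) ((Functor.const K).map ((φ ≫ i.hom).app bot)) (φ ≫ i.hom)
      (hbot.fromConst G') :=
  h.of_iso (Iso.refl _) (Iso.refl _) ((Functor.const K).mapIso (i.app bot)) i (by simp)
    (by ext; simp) (by simp) (by ext; simp)

theorem isOpcartesian_of_isPushout_fromConst (P : ObjectProperty (K ⥤ A))
    {F G : P.FullSubcategory} (φ : F ⟶ G)
    (h : IsPushout (hbot.fromConst F.obj) ((Functor.const K).map (φ.hom.app bot)) φ.hom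
      (hbot.fromConst G.obj)) :
    IsOpcartesian (P.ι ⋙ (evaluation K A).obj bot) φ := by
  intro H ψ χ (hχ : ψ.hom.app bot = φ.hom.app bot ≫ χ)
  have w : hbot.fromConst F.obj ≫ ψ.hom =
      (Functor.const K).map (φ.hom.app bot) ≫ (Functor.const K).map χ ≫ hbot.fromConst H.obj := by
    ext x
    simp [hχ]
  refine ⟨ObjectProperty.homMk (h.desc _ _ w), ⟨?_, ?_⟩, ?_⟩
  · ext1
    exact h.inl_desc _ _ w
  · change (h.desc _ _ w).app bot = χ
    simpa [-IsPushout.inr_desc] using congr_app (h.inr_desc _ _ w) bot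
  · rintro χ' ⟨hφχ', hχ'⟩
    ext1
    apply h.hom_ext
    · exact (P.ι.congr_map hφχ').trans (h.inl_desc _ _ w).symm
    · ext x
      simp [← hχ']

theorem exists_isPushout_fromConst [HasPushouts A] (F : K ⥤ A) {A₀ : A} (f : F.obj bot ⟶ A₀) :
    ∃ (G : K ⥤ A) (φ : F ⟶ G) (h : G.obj bot = A₀), φ.app bot ≫ eqToHom h = f ∧
      IsPushout (hbot.fromConst F) ((Functor.const K).map (φ.app bot)) φ (hbot.fromConst G) := by
  let inl := pushout.inl (hbot.fromConst F) ((Functor.const K).map f)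
  let inr := pushout.inr (hbot.fromConst F) ((Functor.const K).map f)
  have hpo := IsPushout.of_hasPushout (hbot.fromConst F) ((Functor.const K).map f)
  have : IsIso ((hbot.fromConst F).app bot) := by
    rw [IsInitial.fromConst_app, hbot.to_self]
    infer_instance
  have : IsIso (inr.app bot) := (hpo.app bot).isIso_inr_of_isIso
  have hinl : inl.app bot = f ≫ inr.app bot := by simpa using congr_app hpo.w bot
  -- `IsOpfibration` asks for `G.obj bot = A₀` on the nose, not just up to isomorphism.
  obtain ⟨G, i, h, hi⟩ := Functor.exists_iso_obj_eq_s17 _ (asIso (inr.app bot)).symm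
  refine ⟨G, inl ≫ i.hom, h, by simp [hi, hinl], ?_⟩
  refine IsPushout.fromConst_comp_iso hbot ?_ i
  exact hpo.of_iso (Iso.refl _) (Iso.refl _) ((Functor.const K).mapIso (asIso (inr.app bot)))
    (Iso.refl _) (by simp) (by ext; simp [hinl]) (by simp [inl])
    (by ext x; simpa using inr.naturality (hbot.to x))

end InitialObject

section MonoValued

variable {K A : Type*} [Category K] [Category A] [Abelian A]

theorem MonoValued.of_isPushout {F G : K ⥤ A} (hF : MonoValued F) (φ : F ⟶ G)
    (h : ∀ ⦃x y : K⦄ (u : x ⟶ y), IsPushout (F.map u) (φ.app x) (φ.app y) (G.map u)) :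
    MonoValued G := fun _ _ u =>
  have := hF u
  Abelian.mono_inr_of_isColimit _ _ (h u).isColimit

variable {bot : K}

theorem exists_monoValued_isPushout_fromConst (hbot : IsInitial bot)
    {F : ObjectProperty.FullSubcategory (MonoValued (A := A) (K := K))} {A₀ : A}
    (f : F.obj.obj bot ⟶ A₀) :
    ∃ (G : ObjectProperty.FullSubcategory (MonoValued (A := A) (K := K))) (φ : F ⟶ G)
      (h : G.obj.obj bot = A₀), φ.hom.app bot ≫ eqToHom h = f ∧
      IsPushout (hbot.fromConst F.obj) ((Functor.const K).map (φ.hom.app bot)) φ.hom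
        (hbot.fromConst G.obj) := by
  obtain ⟨G, φ, h, hf, hsq⟩ := exists_isPushout_fromConst hbot F.obj f
  exact ⟨⟨G, F.property.of_isPushout φ ((isPushout_fromConst_iff hbot φ).1 hsq)⟩,
    ObjectProperty.homMk φ, h, hf, hsq⟩

theorem isOpcartesian_iff_isPushout (hbot : IsInitial bot)
    {F G : ObjectProperty.FullSubcategory (MonoValued (A := A) (K := K))} (φ : F ⟶ G) :
    IsOpcartesian (ObjectProperty.ι (MonoValued (A := A) (K := K)) ⋙ (evaluation K A).obj bot) φ ↔
      ∀ ⦃x y : K⦄ (u : x ⟶ y),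
        IsPushout (F.obj.map u) (φ.hom.app x) (φ.hom.app y) (G.obj.map u) := by
  rw [← isPushout_fromConst_iff hbot]
  refine ⟨fun hφ => ?_, isOpcartesian_of_isPushout_fromConst hbot _ φ⟩
  obtain ⟨G₀, φ₀, h, hφ₀, hsq⟩ := exists_monoValued_isPushout_fromConst hbot (φ.hom.app bot)
  obtain ⟨i, rfl⟩ :=
    (isOpcartesian_of_isPushout_fromConst hbot _ φ₀ hsq).exists_iso hφ (eqToIso h) hφ₀
  exact hsq.fromConst_comp_iso hbot ((ObjectProperty.ι _).mapIso i)

end MonoValued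

/-- Let `A` be abelian and `K` a category with initial object `⊥`.  Then evaluation at `⊥`,
restricted to the full subcategory `Fun^mono(K,A)` of functors landing in monomorphisms, is
a Grothendieck opfibration, and a morphism `φ` there is opcartesian if and only if every
naturality square of `φ` is a pushout square in `A`. -/
theorem stmt17 {A K : Type*} [Category A] [Category K] [Abelian A]
    (bot : K) (hbot : IsInitial bot) :
    IsOpfibration
      (ObjectProperty.ι (MonoValued (A := A) (K := K)) ⋙ (evaluation K A).obj bot) ∧
      ∀ (F G : ObjectProperty.FullSubcategory (MonoValued (A := A) (K := K))) (φ : F ⟶ G),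
        IsOpcartesian
            (ObjectProperty.ι (MonoValued (A := A) (K := K)) ⋙
              (evaluation K A).obj bot) φ ↔
          ∀ ⦃x y : K⦄ (u : x ⟶ y),
            IsPushout (F.obj.map u)
              (((ObjectProperty.ι (MonoValued (A := A) (K := K))).map φ).app x)
              (((ObjectProperty.ι (MonoValued (A := A) (K := K))).map φ).app y)
              (G.obj.map u) := by
  refine ⟨fun F A₀ f => ?_, fun F G φ => isOpcartesian_iff_isPushout hbot φ⟩
  obtain ⟨G, φ, h, hf, hsq⟩ := exists_monoValued_isPushout_fromConst hbot f
  exact ⟨G, φ, h, isOpcartesian_of_isPushout_fromConst hbot _ φ hsq, hf⟩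
end
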